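/- arXiv:2305.11887 — 2 statements merged into one kernel-verified Lean document; each statement's English description precedes it below -/
import Mathlib

section
/- Call a fixed point J of the monotone jump operator κ intrinsic if J is compatible with every fixed point of κ (i.e., for every fixed point J', J and J' never assign opposite classical values to the same sentence; equivalently J and J' have an upper bound among partial valuations). Then the set of intrinsic fixed points is nonempty (it contains the least fixed point) and is directed, and if κ preserves suprema of compatible families, the supremum of all intrinsic fixed points is itself an intrinsic fixed point: the largest intrinsic fixed point exists. -/
open Classical in
noncomputable section

/-- Extension order on partial valuations. -/
def PV.le {S : Type} (J J' : S → Option Bool) : Prop :=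
  ∀ s b, J s = some b → J' s = some b

/-- Compatibility: never assign opposite classical values to the same sentence. -/
def PV.compat {S : Type} (J J' : S → Option Bool) : Prop :=
  ∀ s b b', J s = some b → J' s = some b' → b = b'

/-- Supremum (union) of a family of pairwise compatible partial valuations. -/
noncomputable def PV.sup {S : Type} (A : Set (S → Option Bool)) : S → Option Bool :=
  fun s =>
    if h : ∃ b, ∃ J ∈ A, J s = some b then some h.choose else none

def PV.isFix {S : Type} (κ : (S → Option Bool) → (S → Option Bool))
    (J : S → Option Bool) : Prop := κ J = J

/-- A fixed point is intrinsic if it is compatible with every fixed point. -/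
def PV.intrinsic {S : Type} (κ : (S → Option Bool) → (S → Option Bool))
    (J : S → Option Bool) : Prop :=
  PV.isFix κ J ∧ ∀ J', PV.isFix κ J' → PV.compat J J'

theorem largest_intrinsic_fixed_point_exists
    {S : Type} (κ : (S → Option Bool) → (S → Option Bool))
    (hmono : ∀ J J', PV.le J J' → PV.le (κ J) (κ J'))
    (J₀ : S → Option Bool)
    (hJ₀fix : PV.isFix κ J₀)
    (hJ₀least : ∀ J, PV.isFix κ J → PV.le J₀ J)
    (hsup : ∀ A : Set (S → Option Bool),
      (∀ J ∈ A, PV.isFix κ J) →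
      (∀ J ∈ A, ∀ J' ∈ A, PV.compat J J') →
      PV.isFix κ (PV.sup A)) :
    PV.intrinsic κ J₀ ∧
    (∀ J J', PV.intrinsic κ J → PV.intrinsic κ J' →
      ∃ K, PV.intrinsic κ K ∧ PV.le J K ∧ PV.le J' K) ∧
    (∃ Jmax, PV.intrinsic κ Jmax ∧ ∀ J, PV.intrinsic κ J → PV.le J Jmax) := by

  classical
  -- Set of intrinsic fixed points
  set A : Set (S → Option Bool) := {J | PV.intrinsic κ J} with hA
  have hfixA : ∀ J ∈ A, PV.isFix κ J := fun J hJ => hJ.1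
  have hcompA : ∀ J ∈ A, ∀ J' ∈ A, PV.compat J J' := fun J hJ J' hJ' => hJ.2 J' hJ'.1
  have hsupfix : PV.isFix κ (PV.sup A) := hsup A hfixA hcompA
  -- key: sup A s = some b → ∃ J ∈ A, J s = some b
  have hsupsome : ∀ s b, PV.sup A s = some b → ∃ J ∈ A, J s = some b := by
    intro s b hb
    unfold PV.sup at hb
    split at hb
    · rename_i h
      obtain ⟨J, hJA, hJs⟩ := h.choose_spec
      exact ⟨J, hJA, by rwa [Option.some_inj.mp hb] at hJs⟩
    · exact absurd hb (by simp)
  have hJ₀int : PV.intrinsic κ J₀ := by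
    refine ⟨hJ₀fix, fun J' hJ' s b b' hb hb' => ?_⟩
    have := hJ₀least J' hJ' s b hb
    rw [this] at hb'; exact Option.some_inj.mp hb'
  have hsupint : PV.intrinsic κ (PV.sup A) := by
    refine ⟨hsupfix, fun J' hJ' s b b' hb hb' => ?_⟩
    obtain ⟨J, hJA, hJs⟩ := hsupsome s b hb
    exact hJA.2 J' hJ' s b b' hJs hb'
  have hle : ∀ J ∈ A, PV.le J (PV.sup A) := by
    intro J hJA s b hb
    have hex : ∃ b, ∃ J ∈ A, J s = some b := ⟨b, J, hJA, hb⟩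
    unfold PV.sup
    rw [dif_pos hex]
    obtain ⟨J', hJ'A, hJ's⟩ := hex.choose_spec
    have := hcompA J hJA J' hJ'A s b hex.choose hb hJ's
    rw [this]
  refine ⟨hJ₀int, ?_, ⟨PV.sup A, hsupint, fun J hJ => hle J hJ⟩⟩
  intro J J' hJ hJ'
  exact ⟨PV.sup A, hsupint, hle J hJ, hle J' hJ'⟩
end
end

section
/- In the three-valued Yablo setting there is no stable assignment: any partial function v : ℕ ⇀ Bool satisfying (v i = some true → ∀ k > i, v k = some false) and (v i = some false → ∃ k > i, v k = some true) for all i has empty domain, i.e., v i = none for every i. -/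
theorem yablo_no_stable_partial_assignment
    (v : ℕ → Option Bool)
    (h1 : ∀ i, v i = some true → ∀ k > i, v k = some false)
    (h2 : ∀ i, v i = some false → ∃ k > i, v k = some true) :
    ∀ i, v i = none := by
  have ht : ∀ i, v i ≠ some true := by
    intro i hi
    have hall := h1 i hi
    obtain ⟨k, hk, hkt⟩ := h2 (i + 1) (hall (i + 1) (Nat.lt_succ_self i))
    have := hall k (lt_trans (Nat.lt_succ_self i) hk)
    simp [this] at hkt
  intro i
  cases h : v i with
  | none => rfl
  | some b =>
    cases b with
    | true => exact absurd h (ht i)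
    | false =>
      obtain ⟨k, _, hkt⟩ := h2 i h
      exact absurd hkt (ht k)
end
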